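/- arXiv:2301.06227 — 4 statements merged into one kernel-verified Lean document; each statement's English description precedes it below -/
import Mathlib

section
/- There exist n ≥ 1, real numbers a(0), a(1) ∈ (0, 1), and vectors X(0), X_T ∈ ℝ^{2n} such that the set { (U(0), U(1)) ∈ ℝ^{2n} × ℝ^{2n} : 𝒜_{a(1)}(U(1)) · (𝒜_{a(0)}(U(0)) · X(0) + U(0)) + U(1) = X_T } is not a convex subset of ℝ^{2n} × ℝ^{2n}. -/
/-- The coefficient matrix `𝒜_a(U)` of the moment system: a `2n × 2n` lower-triangular
matrix whose `(l, j)` entry (with indices `1 ≤ j ≤ l ≤ 2n`, here encoded as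
Fin-indices `i = l - 1`, `k = j - 1`) is `C(l, j) · a^j · u_{l-j}`, with the
convention `u_0 = 1`.  The vector `U : Fin (2*n) → ℝ` encodes `(u_1, …, u_{2n})`. -/
def momentMatrix (n : ℕ) (a : ℝ) (U : Fin (2 * n) → ℝ) :
    Matrix (Fin (2 * n)) (Fin (2 * n)) ℝ := fun i k =>
  if h : (k : ℕ) < (i : ℕ) then
    (Nat.choose ((i : ℕ) + 1) ((k : ℕ) + 1) : ℝ) * a ^ ((k : ℕ) + 1) *
      U ⟨(i : ℕ) - (k : ℕ) - 1, by have := i.isLt; omega⟩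
  else if (k : ℕ) = (i : ℕ) then
    (Nat.choose ((i : ℕ) + 1) ((k : ℕ) + 1) : ℝ) * a ^ ((k : ℕ) + 1)
  else 0

/-- The set of two-step control-moment sequences steering `X(0)` to `X_T`
is in general not convex. -/
theorem exists_nonconvex_two_step_control_set :
    ∃ (n : ℕ), 1 ≤ n ∧ ∃ (a0 a1 : ℝ), a0 ∈ Set.Ioo (0 : ℝ) 1 ∧ a1 ∈ Set.Ioo (0 : ℝ) 1 ∧
      ∃ (X0 XT : Fin (2 * n) → ℝ),
        ¬ Convex ℝ { p : (Fin (2 * n) → ℝ) × (Fin (2 * n) → ℝ) |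
            (momentMatrix n a1 p.2).mulVec
                ((momentMatrix n a0 p.1).mulVec X0 + p.1) + p.2 = XT } := by
  refine ⟨1, le_refl 1, 1/2, 1/2, ⟨by norm_num, by norm_num⟩, ⟨by norm_num, by norm_num⟩,
    0, 0, ?_⟩
  intro h
  have hp : ((![1, 0], ![-1/2, 1/2]) : (Fin (2*1) → ℝ) × (Fin (2*1) → ℝ)) ∈
      { p : (Fin (2*1) → ℝ) × (Fin (2*1) → ℝ) |
        (momentMatrix 1 (1/2) p.2).mulVec
            ((momentMatrix 1 (1/2) p.1).mulVec 0 + p.1) + p.2 = 0 } := by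
    show _ = _
    funext i
    fin_cases i <;>
      simp [momentMatrix, Matrix.mulVec, dotProduct, Fin.sum_univ_succ] <;> norm_num
  have hq : ((![-1, 0], ![1/2, 1/2]) : (Fin (2*1) → ℝ) × (Fin (2*1) → ℝ)) ∈
      { p : (Fin (2*1) → ℝ) × (Fin (2*1) → ℝ) |
        (momentMatrix 1 (1/2) p.2).mulVec
            ((momentMatrix 1 (1/2) p.1).mulVec 0 + p.1) + p.2 = 0 } := by
    show _ = _
    funext i
    fin_cases i <;>
      simp [momentMatrix, Matrix.mulVec, dotProduct, Fin.sum_univ_succ] <;> norm_num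
  have hm := h hp hq (by norm_num : (0:ℝ) ≤ 1/2) (by norm_num : (0:ℝ) ≤ 1/2) (by norm_num)
  have := congrFun hm ⟨1, by norm_num⟩
  simp [momentMatrix, Matrix.mulVec, dotProduct, Fin.sum_univ_succ,
    Prod.smul_fst, Prod.smul_snd] at this
end

section
/- Fix n ≥ 1 and let a : ℕ → ℝ satisfy 0 < a(k) ≤ c for all k, where c < 1 is a fixed constant. Let X(0) ∈ ℝ^{2n} be arbitrary and let X_T ∈ ℝ^{2n} satisfy [X_T]_H positive definite. Then there exists a finite natural number K such that the vector X_T − D_K · X(0) lies in V_{++}^{2n}, where D_K is the 2n×2n diagonal matrix with j-th diagonal entry Π_{k=0}^{K−1} a(k)^j. (This is the key step establishing controllability of the moment system: applying zero control for K steps and then a final control input whose moment vector is X_T − D_K X(0) steers X(0) to X_T.) -/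
/-!
Positive definiteness of a symmetric real matrix is an open condition: the quadratic form is
jointly continuous in the matrix and the vector, and positive on the compact unit sphere, so it
stays positive there for all nearby matrices. The Hankel matrix depends continuously on the moment
vector and is always symmetric, while `D_K X(0) → 0` because the `j`-th diagonal entry of `D_K`
is squeezed between `0` and `(c ^ j) ^ K`.
-/

/-- The Hankel matrix of a truncated moment vector `X = (σ_1, …, σ_{2n})`, with the
convention `σ_0 = 1`: the `(n+1) × (n+1)` matrix whose `(i, j)` entry is `σ_{i+j}`. -/
def hankel (n : ℕ) (X : Fin (2 * n) → ℝ) : Matrix (Fin (n + 1)) (Fin (n + 1)) ℝ :=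
  fun i j =>
    if h : (i : ℕ) + (j : ℕ) = 0 then 1
    else X ⟨(i : ℕ) + (j : ℕ) - 1, by have := i.isLt; have := j.isLt; omega⟩

open Filter Topology Finset Matrix

namespace Matrix

variable {ι : Type*} [Fintype ι]

theorem IsHermitian.posDef_of_forall_mem_sphere {N : Matrix ι ι ℝ} (hN : N.IsHermitian)
    (h : ∀ x ∈ Metric.sphere (0 : ι → ℝ) 1, 0 < x ⬝ᵥ N *ᵥ x) : N.PosDef := by
  refine .of_dotProduct_mulVec_pos hN fun x hx => ?_
  have hx' : 0 < ‖x‖ := norm_pos_iff.2 hx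
  have hscaled := h (‖x‖⁻¹ • x) (by simp [norm_smul, hx'.ne'])
  rw [mulVec_smul, smul_dotProduct, dotProduct_smul, smul_eq_mul, smul_eq_mul] at hscaled
  rw [star_trivial]
  exact pos_of_mul_pos_right (pos_of_mul_pos_right hscaled (by positivity)) (by positivity)

theorem PosDef.eventually_posDef {M : Matrix ι ι ℝ} (hM : M.PosDef) :
    ∀ᶠ N in 𝓝 M, N.IsHermitian → N.PosDef := by
  have hq : Continuous fun p : Matrix ι ι ℝ × (ι → ℝ) => p.2 ⬝ᵥ p.1 *ᵥ p.2 :=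
    continuous_snd.dotProduct (continuous_fst.matrix_mulVec continuous_snd)
  have hpos : ∀ᶠ N in 𝓝 M, ∀ x ∈ Metric.sphere (0 : ι → ℝ) 1, 0 < x ⬝ᵥ N *ᵥ x := by
    refine (isCompact_sphere 0 1).eventually_forall_of_forall_eventually fun x hx => ?_
    refine (isOpen_lt continuous_const hq).mem_nhds ?_
    simpa using hM.dotProduct_mulVec_pos (ne_zero_of_mem_sphere one_ne_zero ⟨x, hx⟩)
  exact hpos.mono fun N hN hherm => hherm.posDef_of_forall_mem_sphere hN

end Matrix

theorem tendsto_prod_range_nhds_zero {b : ℕ → ℝ} {r : ℝ} (hb0 : ∀ k, 0 ≤ b k)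
    (hbr : ∀ k, b k ≤ r) (hr : r < 1) :
    Tendsto (fun K => ∏ k ∈ range K, b k) atTop (𝓝 0) := by
  have hr0 : 0 ≤ r := (hb0 0).trans (hbr 0)
  refine squeeze_zero (fun K => prod_nonneg fun k _ => hb0 k) (fun K => ?_)
    (tendsto_pow_atTop_nhds_zero_of_lt_one hr0 hr)
  simpa using prod_le_prod (fun k _ => hb0 k) (fun k _ => hbr k) (s := range K)

theorem isHermitian_hankel (n : ℕ) (X : Fin (2 * n) → ℝ) : (hankel n X).IsHermitian := by
  ext i j
  simp only [conjTranspose_apply, star_trivial, hankel, add_comm (i : ℕ)]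

theorem continuous_hankel (n : ℕ) : Continuous (hankel n) :=
  continuous_pi fun i => continuous_pi fun j => by
    unfold hankel
    split_ifs
    exacts [continuous_const, continuous_apply _]

theorem exists_steps_diff_posDef_general (n : ℕ)
    (a : ℕ → ℝ) (c : ℝ) (hc : c < 1)
    (ha_pos : ∀ k, 0 < a k) (ha_le : ∀ k, a k ≤ c)
    (X0 XT : Fin (2 * n) → ℝ) (hXT : (hankel n XT).PosDef) :
    ∃ K : ℕ,
      (hankel n (fun i =>
        XT i - (∏ k ∈ Finset.range K, (a k) ^ ((i : ℕ) + 1)) * X0 i)).PosDef := by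
  have hc0 : 0 ≤ c := (ha_pos 0).le.trans (ha_le 0)
  have hD : ∀ i : Fin (2 * n),
      Tendsto (fun K => ∏ k ∈ range K, a k ^ ((i : ℕ) + 1)) atTop (𝓝 0) := fun i =>
    tendsto_prod_range_nhds_zero (fun k => pow_nonneg (ha_pos k).le _)
      (fun k => pow_le_pow_left₀ (ha_pos k).le (ha_le k) _) (pow_lt_one₀ hc0 hc (by omega))
  have hX : Tendsto (fun K i => XT i - (∏ k ∈ range K, a k ^ ((i : ℕ) + 1)) * X0 i) atTop
      (𝓝 XT) :=
    tendsto_pi_nhds.2 fun i => by simpa using tendsto_const_nhds.sub ((hD i).mul_const (X0 i))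
  obtain ⟨K, hK⟩ := (((continuous_hankel n).tendsto XT).comp hX).eventually
    hXT.eventually_posDef |>.exists
  exact ⟨K, hK (isHermitian_hankel n _)⟩

/-- Controllability key step: for a stable system (`0 < a k ≤ c < 1`), given any initial
moment vector `X0` and any terminal moment vector `XT` with positive definite Hankel
matrix, after finitely many uncontrolled steps the difference `XT - D_K X0` has a
positive definite Hankel matrix, where `D_K` is the diagonal matrix with entries
`∏_{k<K} a(k)^j`. -/
theorem exists_steps_diff_posDef (n : ℕ) (hn : 1 ≤ n)
    (a : ℕ → ℝ) (c : ℝ) (hc : c < 1)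
    (ha_pos : ∀ k, 0 < a k) (ha_le : ∀ k, a k ≤ c)
    (X0 XT : Fin (2 * n) → ℝ) (hXT : (hankel n XT).PosDef) :
    ∃ K : ℕ,
      (hankel n (fun i =>
        XT i - (∏ k ∈ Finset.range K, (a k) ^ ((i : ℕ) + 1)) * X0 i)).PosDef :=
  exists_steps_diff_posDef_general n a c hc ha_pos ha_le X0 XT hXT
end

section
/- Let α > 1 be a real number. Then the function t ↦ (α^t − 1)^{1/t} is monotone nondecreasing on (0, ∞); in particular, for all real numbers 0 < s ≤ t, (α^s − 1)^{1/s} ≤ (α^t − 1)^{1/t}. -/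
lemma key_ineq (α : ℝ) (hα : 1 < α) {s t : ℝ} (hs : 0 < s) (hst : s ≤ t) :
    (α ^ s - 1) ^ (1 / s) ≤ (α ^ t - 1) ^ (1 / t) := by
  have ht : 0 < t := hs.trans_le hst
  have hαs : 1 < α ^ s := Real.one_lt_rpow_iff_of_pos (by linarith) |>.2 (Or.inl ⟨hα, hs⟩)
  have hx : (0:ℝ) ≤ α ^ s - 1 := by linarith
  have hp1 : 1 ≤ t / s := (one_le_div hs).2 hst
  have h1 : (α ^ s - 1) ^ (t / s) + 1 ≤ α ^ t := by
    have hnn := NNReal.add_rpow_le_rpow_add (Real.toNNReal (α ^ s - 1)) 1 hp1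
    have hr := NNReal.coe_le_coe.2 hnn
    push_cast [NNReal.coe_rpow, Real.coe_toNNReal _ hx] at hr
    have h2 : (α ^ s) ^ (t / s) = α ^ t := by
      rw [← Real.rpow_mul (by linarith : (0:ℝ) ≤ α)]
      congr 1
      field_simp
    simpa [h2] using hr
  have h3 : (α ^ s - 1) ^ (t / s) ≤ α ^ t - 1 := by linarith
  have h4 := Real.rpow_le_rpow (Real.rpow_nonneg hx _) h3 (by positivity : (0:ℝ) ≤ 1 / t)
  have he : t / s * (1 / t) = 1 / s := by field_simp
  rwa [← Real.rpow_mul hx, he] at h4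

/-- For `α > 1`, the function `t ↦ (α^t − 1)^(1/t)` is monotone nondecreasing on
`(0, ∞)`; in particular `(α^s − 1)^(1/s) ≤ (α^t − 1)^(1/t)` whenever `0 < s ≤ t`. -/
theorem monotoneOn_rpow_sub_one_rpow_inv (α : ℝ) (hα : 1 < α) :
    MonotoneOn (fun t : ℝ => (α ^ t - 1) ^ (1 / t)) (Set.Ioi (0 : ℝ)) ∧
    ∀ s t : ℝ, 0 < s → s ≤ t →
      (α ^ s - 1) ^ (1 / s) ≤ (α ^ t - 1) ^ (1 / t) := by
  constructor
  · intro s hs t _ hst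
    exact key_ineq α hα hs hst
  · intro s t hs hst
    exact key_ineq α hα hs hst
end

section
/- Let u be a real-valued random variable on a probability space, let α > 1 be a real number, and let s, t be natural numbers with 1 ≤ s < t and E[|u|^t] < ∞. Then ((α^s − 1) · E[|u|^s])^{1/s} ≤ ((α^t − 1) · E[|u|^t])^{1/t}. -/
/-!
Both factors of the product are increasing in the exponent when raised to its reciprocal. For the
moments this is Lyapunov's inequality, i.e. monotonicity of `L^p` norms on a probability space.
For the coefficients, with `a = α ^ p - 1` and `r = q / p ≥ 1`, superadditivity of `x ↦ x ^ r`
gives `a ^ r + 1 ≤ (a + 1) ^ r = α ^ q`.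
-/

open MeasureTheory

theorem Real.rpow_sub_one_rpow_one_div_le {α p q : ℝ} (hα : 1 ≤ α) (hp : 0 < p) (hpq : p ≤ q) :
    (α ^ p - 1) ^ (1 / p) ≤ (α ^ q - 1) ^ (1 / q) := by
  have hq : 0 < q := hp.trans_le hpq
  have ha : 0 ≤ α ^ p - 1 := sub_nonneg.2 (Real.one_le_rpow hα hp.le)
  have hr : 1 ≤ q / p := (one_le_div hp).2 hpq
  have hsuper : (α ^ p - 1) ^ (q / p) ≤ α ^ q - 1 := by
    have h := Real.add_rpow_le_rpow_add ha zero_le_one hr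
    rwa [Real.one_rpow, sub_add_cancel, ← Real.rpow_mul (by linarith), mul_div_cancel₀ _ hp.ne',
      ← le_sub_iff_add_le] at h
  calc (α ^ p - 1) ^ (1 / p) = ((α ^ p - 1) ^ (q / p)) ^ (1 / q) := by
        rw [← Real.rpow_mul ha]; field_simp
    _ ≤ (α ^ q - 1) ^ (1 / q) := by gcongr

theorem integral_norm_rpow_rpow_one_div_le {Ω E : Type*} [MeasurableSpace Ω]
    [NormedAddCommGroup E] {μ : Measure Ω} [IsProbabilityMeasure μ] {f : Ω → E}
    (hf : AEStronglyMeasurable f μ) {p q : ℝ} (hp : 0 < p) (hpq : p ≤ q)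
    (hfq : Integrable (fun ω => ‖f ω‖ ^ q) μ) :
    (∫ ω, ‖f ω‖ ^ p ∂μ) ^ (1 / p) ≤ (∫ ω, ‖f ω‖ ^ q ∂μ) ^ (1 / q) := by
  have hq : 0 < q := hp.trans_le hpq
  have hfq' : MemLp f (ENNReal.ofReal q) μ := by
    rw [← memLp_norm_rpow_iff hf (by simpa using hq) ENNReal.ofReal_ne_top,
      ENNReal.div_self (by simpa using hq) ENNReal.ofReal_ne_top, memLp_one_iff_integrable,
      ENNReal.toReal_ofReal hq.le]
    exact hfq
  have hpq' : ENNReal.ofReal p ≤ ENNReal.ofReal q := ENNReal.ofReal_le_ofReal hpq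
  have h := eLpNorm_le_eLpNorm_of_exponent_le hpq' hf (μ := μ)
  rw [(hfq'.mono_exponent hpq').eLpNorm_eq_integral_rpow_norm (by simpa using hp)
      ENNReal.ofReal_ne_top, hfq'.eLpNorm_eq_integral_rpow_norm (by simpa using hq)
      ENNReal.ofReal_ne_top, ENNReal.ofReal_le_ofReal_iff (by positivity),
      ENNReal.toReal_ofReal hp.le, ENNReal.toReal_ofReal hq.le] at h
  simpa only [one_div] using h

/-- Scaled Lyapunov inequality (Lemma 3.3 of the paper): for a real random variable `u`,
`α > 1` and naturals `1 ≤ s < t` with `E[|u|^t] < ∞`,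
`((α^s − 1)·E[|u|^s])^{1/s} ≤ ((α^t − 1)·E[|u|^t])^{1/t}`. -/
theorem scaled_lyapunov_inequality {Ω : Type*} [MeasurableSpace Ω]
    (P : Measure Ω) [IsProbabilityMeasure P]
    (u : Ω → ℝ) (hu : Measurable u)
    (α : ℝ) (hα : 1 < α)
    (s t : ℕ) (hs : 1 ≤ s) (hst : s < t)
    (ht : Integrable (fun ω => |u ω| ^ t) P) :
    ((α ^ s - 1) * ∫ ω, |u ω| ^ s ∂P) ^ (1 / (s : ℝ))
      ≤ ((α ^ t - 1) * ∫ ω, |u ω| ^ t ∂P) ^ (1 / (t : ℝ)) := by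
  have hs₀ : (0 : ℝ) < s := by exact_mod_cast hs
  have hst' : (s : ℝ) ≤ t := by exact_mod_cast hst.le
  simp only [← Real.rpow_natCast, ← Real.norm_eq_abs] at ht ⊢
  have hαs : 0 ≤ α ^ (s : ℝ) - 1 := sub_nonneg.2 (Real.one_le_rpow hα.le hs₀.le)
  have hαt : 0 ≤ α ^ (t : ℝ) - 1 := sub_nonneg.2 (Real.one_le_rpow hα.le (hs₀.trans_le hst').le)
  rw [Real.mul_rpow hαs (by positivity), Real.mul_rpow hαt (by positivity)]
  exact mul_le_mul (Real.rpow_sub_one_rpow_one_div_le hα.le hs₀ hst')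
    (integral_norm_rpow_rpow_one_div_le hu.aestronglyMeasurable hs₀ hst' ht) (by positivity)
    (Real.rpow_nonneg hαt _)
end
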